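/- arXiv:1107.2661 — 10 statements merged into one kernel-verified Lean document; each statement's English description precedes it below -/
import Mathlib

section
/- Let (b_n) be a D-sequence. Then there exists a subsequence (c_n) of (b_n) with c_0 = b_0 = 1 which is again a D-sequence and satisfies c_{n+1}/c_n → ∞. -/
def IsDSeq (b : ℕ → ℕ) : Prop :=
  b 0 = 1 ∧ (∀ n, b n ∣ b (n + 1)) ∧ ∀ n, b n ≠ b (n + 1)

lemma tri_step (n : ℕ) : (n + 1) * (n + 2) / 2 = n * (n + 1) / 2 + (n + 1) := by
  have h2 : 2 ∣ n * (n + 1) := (Nat.even_mul_succ_self n).two_dvd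
  have h3 : (n + 1) * (n + 2) = n * (n + 1) + 2 * (n + 1) := by ring
  omega

theorem stmt_3 (b : ℕ → ℕ) (hb : IsDSeq b) :
    ∃ φ : ℕ → ℕ, StrictMono φ ∧ φ 0 = 0 ∧ IsDSeq (b ∘ φ) ∧
      Filter.Tendsto (fun n => (b (φ (n + 1)) : ℝ) / b (φ n)) Filter.atTop Filter.atTop := by
  obtain ⟨h0, hdvd, hne⟩ := hb
  -- positivity
  have hpos : ∀ n, 0 < b n := by
    intro n
    cases n with
    | zero => simp [h0]
    | succ m =>
      by_contra h
      have hz : b (m + 1) = 0 := by omega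
      have hz2 : b (m + 1 + 1) = 0 := by
        have := hdvd (m + 1)
        rw [hz] at this
        exact Nat.eq_zero_of_zero_dvd this
      exact hne (m + 1) (hz.trans hz2.symm)
  -- strict mono of b
  have hlt : ∀ n, b n < b (n + 1) := fun n =>
    lt_of_le_of_ne (Nat.le_of_dvd (hpos (n + 1)) (hdvd n)) (hne n)
  have hmono : StrictMono b := strictMono_nat_of_lt_succ hlt
  -- doubling
  have hdouble : ∀ n, 2 * b n ≤ b (n + 1) := by
    intro n
    obtain ⟨c, hc⟩ := hdvd n
    rcases c with _ | _ | c
    · simp at hc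
      have := hpos (n + 1); omega
    · simp at hc
      exact absurd hc.symm (hne n)
    · have := hpos n
      nlinarith
  have hgrow : ∀ n k, 2 ^ k * b n ≤ b (n + k) := by
    intro n k
    induction k with
    | zero => simp
    | succ j ih =>
      calc 2 ^ (j + 1) * b n = 2 * (2 ^ j * b n) := by ring
        _ ≤ 2 * b (n + j) := by omega
        _ ≤ b (n + j + 1) := hdouble _
  -- the subsequence
  refine ⟨fun n => n * (n + 1) / 2, ?_, by simp, ⟨by simp [h0], ?_, ?_⟩, ?_⟩
  · intro m n hmn
    simp only
    have h2m : 2 ∣ m * (m + 1) := (Nat.even_mul_succ_self m).two_dvd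
    have h2n : 2 ∣ n * (n + 1) := (Nat.even_mul_succ_self n).two_dvd
    have h2 : m * (m + 1) + 2 ≤ n * (n + 1) := by nlinarith
    omega
  · intro n
    simp only [Function.comp_apply, tri_step]
    have : ∀ k, b (n * (n + 1) / 2) ∣ b (n * (n + 1) / 2 + k) := by
      intro k
      induction k with
      | zero => simp
      | succ j ih => exact ih.trans (hdvd _)
    exact this (n + 1)
  · intro n
    simp only [Function.comp_apply, tri_step]
    exact ne_of_lt (hmono (by omega))
  · have hbig : ∀ n, (2 : ℝ) ^ (n + 1) ≤ (b ((n + 1) * (n + 2) / 2) : ℝ) / b (n * (n + 1) / 2) := by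
      intro n
      rw [tri_step, le_div_iff₀ (by exact_mod_cast hpos _)]
      have := hgrow (n * (n + 1) / 2) (n + 1)
      calc (2 : ℝ) ^ (n + 1) * (b (n * (n + 1) / 2) : ℝ)
          = ((2 ^ (n + 1) * b (n * (n + 1) / 2) : ℕ) : ℝ) := by push_cast; ring
        _ ≤ _ := by exact_mod_cast this
    have htend : Filter.Tendsto (fun n : ℕ => (2 : ℝ) ^ (n + 1)) Filter.atTop Filter.atTop :=
      (tendsto_pow_atTop_atTop_of_one_lt (by norm_num : (1:ℝ) < 2)).comp
        (Filter.tendsto_add_atTop_nat 1)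
    exact Filter.tendsto_atTop_mono hbig htend
end

section
/- Let G = ℤ with the group topology whose neighborhood basis at 0 is {b_nℤ : n ∈ ℕ}, for a D-sequence (b_n). Then every continuous homomorphism χ : ℤ → ℝ/ℤ is of the form k ↦ (m k / b_n) + ℤ for some n ∈ ℕ and m ∈ ℤ. Conversely, every map of this form is a continuous homomorphism. -/
open Filter Topology

namespace AddCircle

variable {p : ℝ}

theorem exists_coe_eq_abs_eq_norm (z : AddCircle p) :
    ∃ x : ℝ, (x : AddCircle p) = z ∧ |x| = ‖z‖ := by
  obtain ⟨x, rfl⟩ := QuotientAddGroup.mk_surjective z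
  refine ⟨x - round (p⁻¹ * x) * p, ?_, (norm_eq p).symm⟩
  rw [coe_sub, sub_eq_self, coe_eq_zero_iff]
  exact ⟨round (p⁻¹ * x), zsmul_eq_mul _ _⟩

theorem norm_two_nsmul (hp : 0 < p) {z : AddCircle p} (hz : ‖z‖ ≤ p / 4) :
    ‖2 • z‖ = 2 * ‖z‖ := by
  obtain ⟨x, rfl, hx⟩ := exists_coe_eq_abs_eq_norm z
  have h2x : |2 * x| ≤ |p| / 2 := by
    rw [abs_mul, abs_two, abs_of_pos hp]
    linarith
  rw [← coe_nsmul, nsmul_eq_mul, Nat.cast_ofNat, (norm_coe_eq_abs_iff p hp.ne').mpr h2x, abs_mul,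
    abs_two, hx]

/-- Doubling doubles the norm inside the ball of radius `p / 4`, so `‖2 ^ k • z‖ = 2 ^ k * ‖z‖`
cannot stay small unless `z = 0`. -/
theorem eq_zero_of_forall_norm_nsmul_lt (hp : 0 < p) {z : AddCircle p}
    (h : ∀ n : ℕ, ‖n • z‖ < p / 4) : z = 0 := by
  have h_pow : ∀ k : ℕ, ‖(2 ^ k) • z‖ = 2 ^ k * ‖z‖ := by
    intro k
    induction k with
    | zero => simp
    | succ k ih =>
      rw [pow_succ, mul_nsmul, norm_two_nsmul hp (h _).le, ih]
      ring
  by_contra hz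
  obtain ⟨k, hk⟩ := pow_unbounded_of_one_lt (p / 4 / ‖z‖) one_lt_two
  rw [div_lt_iff₀ (norm_pos_iff.mpr hz), ← h_pow] at hk
  exact (h _).not_gt (by exact_mod_cast hk)

end AddCircle

theorem AddMonoidHom.continuous_iff_exists_le_ker {G ι : Type*} [AddGroup G] [TopologicalSpace G]
    [IsTopologicalAddGroup G] {q : ι → Prop} {H : ι → AddSubgroup G}
    (hbasis : (𝓝 (0 : G)).HasBasis q fun i => (H i : Set G)) {p : ℝ} (hp : 0 < p)
    (χ : G →+ AddCircle p) : Continuous χ ↔ ∃ i, q i ∧ H i ≤ χ.ker := by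
  constructor
  · intro hχ
    have hball : χ ⁻¹' Metric.ball 0 (p / 4) ∈ 𝓝 (0 : G) :=
      hχ.continuousAt.preimage_mem_nhds (by simpa using Metric.ball_mem_nhds 0 (by positivity))
    obtain ⟨i, hi, hsub⟩ := hbasis.mem_iff.mp hball
    refine ⟨i, hi, fun x hx => AddCircle.eq_zero_of_forall_norm_nsmul_lt hp fun n => ?_⟩
    simpa [← map_nsmul] using hsub ((H i).nsmul_mem hx n)
  · rintro ⟨i, hi, hker⟩
    refine continuous_of_continuousAt_zero χ ?_
    have hzero : χ =ᶠ[𝓝 0] fun _ => 0 :=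
      mem_of_superset (hbasis.mem_of_mem hi) fun x hx => hker hx
    simpa [ContinuousAt] using tendsto_const_nhds.congr' hzero.symm

theorem AddMonoidHom.map_natCast_eq_zero_iff_exists_eq_div (χ : ℤ →+ AddCircle (1 : ℝ)) {d : ℕ}
    (hd : d ≠ 0) :
    χ d = 0 ↔ ∃ m : ℤ, ∀ k : ℤ, χ k = ((m * k / d : ℝ) : AddCircle (1 : ℝ)) := by
  have hd' : (d : ℝ) ≠ 0 := Nat.cast_ne_zero.mpr hd
  constructor
  · intro h
    obtain ⟨r, hr⟩ := QuotientAddGroup.mk_surjective (χ 1)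
    have hdr : ((d • r : ℝ) : AddCircle (1 : ℝ)) = 0 := by
      rw [AddCircle.coe_nsmul, hr, ← map_nsmul, nsmul_one, h]
    obtain ⟨m, hm⟩ := (AddCircle.coe_eq_zero_iff 1).mp hdr
    refine ⟨m, fun k => ?_⟩
    have hχk : χ k = k • χ 1 := by rw [← map_zsmul, smul_eq_mul, mul_one]
    rw [zsmul_one, nsmul_eq_mul] at hm
    rw [hχk, ← hr, ← AddCircle.coe_zsmul, zsmul_eq_mul]
    congr 1
    field_simp
    rw [hm]
    ring
  · rintro ⟨m, hm⟩
    rw [← Int.cast_natCast, hm, Int.cast_natCast, Int.cast_natCast, mul_div_cancel_right₀ _ hd',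
      AddCircle.coe_eq_zero_iff]
    exact ⟨m, by simp⟩

theorem IsDSeq.ne_zero {b : ℕ → ℕ} (hb : IsDSeq b) (n : ℕ) : b n ≠ 0 := by
  intro h
  exact hb.2.2 n (h.trans (Nat.eq_zero_of_zero_dvd (h ▸ hb.2.1 n)).symm)

theorem stmt_4 (b : ℕ → ℕ) (hb : IsDSeq b)
    (t : TopologicalSpace ℤ) (htg : @IsTopologicalAddGroup ℤ t _)
    (hbasis : (@nhds ℤ t 0).HasBasis (fun _ : ℕ => True) (fun n => {x : ℤ | (b n : ℤ) ∣ x}))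
    (χ : ℤ →+ AddCircle (1 : ℝ)) :
    @Continuous ℤ (AddCircle (1 : ℝ)) t _ χ ↔
      ∃ (n : ℕ) (m : ℤ), ∀ k : ℤ,
        χ k = ((m * k / (b n : ℝ) : ℝ) : AddCircle (1 : ℝ)) := by
  have hbasis' : (@nhds ℤ t 0).HasBasis (fun _ : ℕ => True)
      fun n => (AddSubgroup.zmultiples (b n : ℤ) : Set ℤ) := by
    convert hbasis using 3 with n
    ext x
    exact Int.mem_zmultiples_iff
  rw [@AddMonoidHom.continuous_iff_exists_le_ker ℤ ℕ _ t htg _ _ hbasis' _ one_pos]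
  simp only [true_and, AddSubgroup.zmultiples_le, AddMonoidHom.mem_ker]
  exact exists_congr fun n => χ.map_natCast_eq_zero_iff_exists_eq_div (hb.ne_zero n)
end

section
/- Let (b_n) be a D-sequence. For each m ∈ ℕ let V_{b,m} = {k ∈ ℤ : for all n, (k/b_n) + ℤ lies in the image of [−1/(4m), 1/(4m)] in ℝ/ℤ}. Then ⋂_{m∈ℕ} V_{b,m} = {0}. -/
namespace IsDSeq

variable {b : ℕ → ℕ}

-- A zero term would force every later term to be zero, since `0 ∣ x` means `x = 0`.
theorem pos (hb : IsDSeq b) (n : ℕ) : 0 < b n := by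
  obtain ⟨hb0, hdvd, hne⟩ := hb
  rcases n with _ | n
  · simp [hb0]
  · refine Nat.pos_of_ne_zero fun hzero => hne (n + 1) ?_
    have hnext := hdvd (n + 1)
    rw [hzero, zero_dvd_iff] at hnext
    rw [hzero, hnext]

theorem strictMono (hb : IsDSeq b) : StrictMono b :=
  strictMono_nat_of_lt_succ fun n =>
    (Nat.le_of_dvd (hb.pos (n + 1)) (hb.2.1 n)).lt_of_ne (hb.2.2 n)

end IsDSeq

theorem one_div_le_abs_div_sub_intCast {k d : ℤ} (hd : 0 < d) (hk : ¬d ∣ k) (z : ℤ) :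
    1 / (d : ℝ) ≤ |(k : ℝ) / d - z| := by
  have hdR : (0 : ℝ) < d := by exact_mod_cast hd
  have hnum : (1 : ℝ) ≤ |(k : ℝ) - z * d| := by
    have hne : k - z * d ≠ 0 := fun h => hk ⟨z, by linarith⟩
    exact_mod_cast Int.one_le_abs hne
  calc 1 / (d : ℝ) ≤ |(k : ℝ) - z * d| / d := by gcongr
    _ = |(k : ℝ) / d - z| := by
      rw [← abs_of_pos hdR, ← abs_div, abs_of_pos hdR, sub_div, mul_div_cancel_right₀ _ hdR.ne']

theorem stmt_8 (b : ℕ → ℕ) (hb : IsDSeq b) :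
    (⋂ m : ℕ, {k : ℤ | ∀ n : ℕ, ∃ z : ℤ, |(k : ℝ) / b n - z| ≤ 1 / (4 * (m + 1))}) =
      {(0 : ℤ)} := by
  ext k
  simp only [Set.mem_iInter, Set.mem_ofPred_eq, Set.mem_singleton_iff]
  refine ⟨fun hk => ?_, fun hk m n => ⟨0, by simp [hk]; positivity⟩⟩
  by_contra hk0
  -- With `|k| < b n`, `k / b n` lies at distance `≥ 1 / b n` from `ℤ`, more than `m = b n` allows.
  obtain ⟨n, hn⟩ : ∃ n, k.natAbs < b n := ⟨k.natAbs + 1, hb.strictMono.id_le _⟩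
  have hbn : 0 < (b n : ℤ) := by exact_mod_cast hb.pos n
  have hlt : |k| < b n := by
    rw [Int.abs_eq_natAbs]
    exact_mod_cast hn
  have hndvd : ¬(b n : ℤ) ∣ k := fun hdvd => hk0 (Int.eq_zero_of_abs_lt_dvd hdvd hlt)
  obtain ⟨z, hz⟩ := hk (b n) n
  have hlow := one_div_le_abs_div_sub_intCast hbn hndvd z
  push_cast at hlow
  have hbnR : (0 : ℝ) < b n := by exact_mod_cast hbn
  have hgap : 1 / (4 * ((b n : ℝ) + 1)) < 1 / b n := one_div_lt_one_div_of_lt hbnR (by linarith)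
  linarith
end

section
/- Let (b_n) be a D-sequence. If the topology τ_b of uniform convergence on {ξ_n : n ∈ ℕ} is discrete (i.e., some V_{b,m} = {0}), then the sequence (b_{n+1}/b_n) is bounded; equivalently, if (b_{n+1}/b_n) is unbounded, then for every m ∈ ℕ there exists a nonzero integer k with |k/b_n mod 1| ≤ 1/(4m) for all n. -/
theorem stmt_9 (b : ℕ → ℕ) (hb : IsDSeq b)
    (hub : ∀ M : ℝ, ∃ n : ℕ, M < (b (n + 1) : ℝ) / b n) :
    ∀ m : ℕ, 0 < m → ∃ k : ℤ, k ≠ 0 ∧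
      ∀ n : ℕ, ∃ z : ℤ, |(k : ℝ) / b n - z| ≤ 1 / (4 * m) := by
  obtain ⟨h0, hdvd, hne⟩ := hb
  have hpos : ∀ n, 0 < b n := by
    intro n
    rcases Nat.eq_zero_or_pos (b n) with h | h
    · exfalso
      have : b (n + 1) = 0 := by
        have := hdvd n; rw [h] at this; exact (zero_dvd_iff).mp this
      exact hne n (by rw [h, this])
    · exact h
  have hmono : Monotone b := monotone_nat_of_le_succ fun n =>
    Nat.le_of_dvd (hpos (n + 1)) (hdvd n)
  have hdvd' : ∀ {i j : ℕ}, i ≤ j → b i ∣ b j := by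
    intro i j hij
    induction j with
    | zero => simp_all
    | succ j ih =>
      rcases Nat.lt_or_ge i (j + 1) with h | h
      · exact (ih (Nat.lt_succ_iff.mp h)).trans (hdvd j)
      · have : i = j + 1 := le_antisymm hij h
        rw [this]
  intro m hm
  obtain ⟨N, hN⟩ := hub (4 * m)
  refine ⟨(b N : ℤ), by exact_mod_cast (hpos N).ne', fun n => ?_⟩
  have hmr : (0 : ℝ) < 4 * m := by positivity
  rcases le_or_gt n N with h | h
  · obtain ⟨c, hc⟩ := hdvd' h
    refine ⟨(c : ℤ), ?_⟩
    have hbn : (b n : ℝ) ≠ 0 := Nat.cast_ne_zero.mpr (hpos n).ne'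
    have : ((b N : ℤ) : ℝ) / b n = c := by
      push_cast [hc]
      field_simp
    rw [this]
    simp [le_of_lt (one_div_pos.mpr hmr)]
  · refine ⟨0, ?_⟩
    have hbn : (0 : ℝ) < b n := Nat.cast_pos.mpr (hpos n)
    have hbN : (0 : ℝ) < b N := Nat.cast_pos.mpr (hpos N)
    have h1 : (4 * m : ℝ) * b N < b (N + 1) := by
      rw [lt_div_iff₀ hbN] at hN
      linarith
    have h2 : (b (N + 1) : ℝ) ≤ b n := by
      exact_mod_cast hmono h
    have h3 : ((b N : ℤ) : ℝ) / b n ≤ 1 / (4 * m) := by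
      rw [div_le_div_iff₀ hbn hmr]
      push_cast
      nlinarith
    have h4 : (0 : ℝ) ≤ ((b N : ℤ) : ℝ) / b n := by positivity
    rw [abs_of_nonneg (by simpa using h4)]
    simpa using h3
end

section
/- Let (b_n) be a D-sequence, m ∈ ℕ, and let integers k_0, …, k_N satisfy |k_j| ≤ (1/(8m)) · (b_{j+1}/b_j) for all 0 ≤ j ≤ N. Then k = ∑_{j=0}^N k_j b_j satisfies: for every n ∈ ℕ, the distance from k/b_n to the nearest integer is at most 1/(4m). -/
theorem Nat.sum_range_succ_le_two_mul_of_two_mul_le {f : ℕ → ℕ} (hf : ∀ n, 2 * f n ≤ f (n + 1))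
    (n : ℕ) : ∑ j ∈ Finset.range n, f (j + 1) ≤ 2 * f n := by
  induction n with
  | zero => simp
  | succ n ih =>
    rw [Finset.sum_range_succ]
    linarith [hf n]

theorem Int.exists_abs_div_sub_le {k r : ℤ} {d : ℕ} {ε : ℝ} (hd : 0 < d) (hdvd : (d : ℤ) ∣ k - r)
    (hr : |(r : ℝ)| ≤ ε * d) : ∃ z : ℤ, |(k : ℝ) / d - z| ≤ ε := by
  obtain ⟨q, hq⟩ := hdvd
  refine ⟨q, ?_⟩
  have hdR : (0 : ℝ) < d := by exact_mod_cast hd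
  have hk : (k : ℝ) = d * q + r := by exact_mod_cast (by linarith : k = d * q + r)
  rw [hk, add_div, mul_div_cancel_left₀ _ hdR.ne', add_sub_cancel_left, abs_div,
    abs_of_pos hdR, div_le_iff₀ hdR]
  exact hr

namespace IsDSeq

variable {b : ℕ → ℕ}

theorem two_mul_le (hb : IsDSeq b) (n : ℕ) : 2 * b n ≤ b (n + 1) := by
  obtain ⟨c, hc⟩ := hb.2.1 n
  have hc0 : c ≠ 0 := by rintro rfl; exact (hb.pos (n + 1)).ne' (by simpa using hc)
  have hc1 : c ≠ 1 := by rintro rfl; exact hb.2.2 n (by simpa using hc.symm)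
  rw [hc, mul_comm]
  exact Nat.mul_le_mul_left _ (by omega)

theorem dvd_of_le (hb : IsDSeq b) {i j : ℕ} (hij : i ≤ j) : b i ∣ b j :=
  Nat.rel_of_forall_rel_succ_of_le (· ∣ ·) hb.2.1 hij

theorem dvd_sum_filter_not_lt (hb : IsDSeq b) (s : Finset ℕ) (k : ℕ → ℤ) (n : ℕ) :
    (b n : ℤ) ∣ ∑ j ∈ s with ¬j < n, k j * b j :=
  Finset.dvd_sum fun _ hj => Dvd.dvd.mul_left
    (Int.natCast_dvd_natCast.mpr (hb.dvd_of_le (not_lt.mp (Finset.mem_filter.mp hj).2))) _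

theorem abs_sum_filter_lt_le (hb : IsDSeq b) {s : Finset ℕ} {x : ℕ → ℝ} {c : ℝ} (hc : 0 ≤ c)
    (hx : ∀ j ∈ s, |x j| * b j ≤ c * b (j + 1)) (n : ℕ) :
    |∑ j ∈ s with j < n, x j * b j| ≤ 2 * c * b n := by
  have hsub : s.filter (· < n) ⊆ Finset.range n := fun j hj =>
    Finset.mem_range.mpr (Finset.mem_filter.mp hj).2
  have hgeom : (∑ j ∈ Finset.range n, b (j + 1) : ℝ) ≤ 2 * b n := by
    exact_mod_cast Nat.sum_range_succ_le_two_mul_of_two_mul_le hb.two_mul_le n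
  calc |∑ j ∈ s with j < n, x j * b j|
      ≤ ∑ j ∈ s with j < n, |x j| * b j := by
        refine (Finset.abs_sum_le_sum_abs _ _).trans_eq (Finset.sum_congr rfl fun _ _ => ?_)
        rw [abs_mul, Nat.abs_cast]
    _ ≤ ∑ j ∈ s with j < n, c * b (j + 1) :=
        Finset.sum_le_sum fun j hj => hx j (Finset.mem_filter.mp hj).1
    _ ≤ ∑ j ∈ Finset.range n, c * b (j + 1) :=
        Finset.sum_le_sum_of_subset_of_nonneg hsub fun _ _ _ => by positivity
    _ = c * ∑ j ∈ Finset.range n, (b (j + 1) : ℝ) := (Finset.mul_sum ..).symm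
    _ ≤ 2 * c * b n := by linarith [mul_le_mul_of_nonneg_left hgeom hc]

end IsDSeq

theorem stmt_10_general (b : ℕ → ℕ) (hb : IsDSeq b) (m : ℕ)
    (N : ℕ) (k : ℕ → ℤ)
    (hk : ∀ j ≤ N, |(k j : ℝ)| ≤ (1 / (8 * m)) * ((b (j + 1) : ℝ) / b j)) :
    ∀ n : ℕ, ∃ z : ℤ,
      |((∑ j ∈ Finset.range (N + 1), k j * (b j : ℤ) : ℤ) : ℝ) / b n - z| ≤ 1 / (4 * m) := by
  intro n
  set s := Finset.range (N + 1)
  refine Int.exists_abs_div_sub_le (r := ∑ j ∈ s with j < n, k j * b j) (hb.pos n) ?_ ?_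
  · rw [← Finset.sum_filter_add_sum_filter_not s (· < n), add_sub_cancel_left]
    exact hb.dvd_sum_filter_not_lt s k n
  have hterm : ∀ j ∈ s, |(k j : ℝ)| * b j ≤ 1 / (8 * m) * b (j + 1) := fun j hj => by
    have hbj : (0 : ℝ) < b j := by exact_mod_cast hb.pos j
    have := mul_le_mul_of_nonneg_right (hk j (Nat.lt_succ_iff.mp (Finset.mem_range.mp hj))) hbj.le
    rwa [mul_assoc, div_mul_cancel₀ _ hbj.ne'] at this
  push_cast
  refine (hb.abs_sum_filter_lt_le (by positivity) hterm n).trans_eq ?_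
  field_simp
  ring

theorem stmt_10 (b : ℕ → ℕ) (hb : IsDSeq b) (m : ℕ) (hm : 0 < m)
    (N : ℕ) (k : ℕ → ℤ)
    (hk : ∀ j ≤ N, |(k j : ℝ)| ≤ (1 / (8 * m)) * ((b (j + 1) : ℝ) / b j)) :
    ∀ n : ℕ, ∃ z : ℤ,
      |((∑ j ∈ Finset.range (N + 1), k j * (b j : ℤ) : ℤ) : ℝ) / b n - z| ≤ 1 / (4 * m) :=
  stmt_10_general b hb m N k hk
end

section
/- Let (b_n) be a D-sequence and x = ∑_{n≥1} d_n/b_n with integers |d_n| ≤ b_n/(2b_{n−1}). For each j ≥ 0 set e_j = b_j d_{j+1}/b_{j+1} + b_j d_{j+2}/b_{j+2} and ε_j = b_j ∑_{n ≥ j+3} d_n/b_n. Then: (1) |e_j| ≤ 3/4; (2) if d_{j+1} ≠ 0 then |e_j| ≥ b_j/(2 b_{j+1}); (3) |ε_j| ≤ b_j/b_{j+2}. Moreover b_j x ≡ e_j + ε_j (mod 1). -/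
theorem stmt_12 (b : ℕ → ℕ) (hb : IsDSeq b)
    (d : ℕ → ℤ) (hd : ∀ n : ℕ, 1 ≤ n → |(d n : ℝ)| ≤ (b n : ℝ) / (2 * b (n - 1)))
    (x : ℝ) (hx : HasSum (fun n : ℕ => (d (n + 1) : ℝ) / b (n + 1)) x)
    (e ε : ℕ → ℝ)
    (he : ∀ j, e j = (b j : ℝ) * d (j + 1) / b (j + 1) + (b j : ℝ) * d (j + 2) / b (j + 2))
    (hε : ∀ j, ε j = (b j : ℝ) * ∑' n : ℕ, (d (n + j + 3) : ℝ) / b (n + j + 3)) :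
    ∀ j : ℕ,
      |e j| ≤ 3 / 4 ∧
      (d (j + 1) ≠ 0 → (b j : ℝ) / (2 * b (j + 1)) ≤ |e j|) ∧
      |ε j| ≤ (b j : ℝ) / b (j + 2) ∧
      ∃ z : ℤ, (b j : ℝ) * x = e j + ε j + z := by
  obtain ⟨hb0, hdvd, hne⟩ := hb
  have hpos : ∀ n, 0 < b n := by
    intro n
    rcases Nat.eq_zero_or_pos (b n) with h | h
    · exfalso
      have h1 := hdvd n
      rw [h] at h1
      have h2 := Nat.eq_zero_of_zero_dvd h1
      exact hne n (by rw [h, h2])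
    · exact h
  have hbR : ∀ n, (0:ℝ) < b n := fun n => by exact_mod_cast hpos n
  have hdouble : ∀ n, 2 * b n ≤ b (n+1) := by
    intro n
    obtain ⟨k, hk⟩ := hdvd n
    have hk2 : 2 ≤ k := by
      rcases k with _ | _ | k
      · exfalso; simp at hk; exact (hpos (n+1)).ne' hk
      · exfalso; apply hne n; omega
      · omega
    have := hpos n
    nlinarith
  have hmono : ∀ m n : ℕ, m ≤ n → b m ∣ b n := by
    intro m n hmn
    induction n with
    | zero => interval_cases m; rfl
    | succ k ih =>
      rcases Nat.lt_or_ge m (k+1) with h | h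
      · exact dvd_trans (ih (by omega)) (hdvd k)
      · have : m = k + 1 := by omega
        rw [this]
  have hpow : ∀ j n : ℕ, 2^n * b j ≤ b (n + j) := by
    intro j n
    induction n with
    | zero => simp
    | succ k ih =>
      have h1 := hdouble (k + j)
      calc 2^(k+1) * b j = 2 * (2^k * b j) := by ring
        _ ≤ 2 * b (k + j) := by omega
        _ ≤ b (k + j + 1) := h1
        _ = b (k + 1 + j) := by ring_nf
  -- term bound: |d m| / b m ≤ 1 / (2 * b (m-1))
  have ht : ∀ m : ℕ, 1 ≤ m → |(d m : ℝ)| / b m ≤ 1 / (2 * b (m - 1)) := by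
    intro m hm
    have h1 := hd m hm
    have h2 := hbR m
    have h3 := hbR (m - 1)
    rw [le_div_iff₀ (by positivity)] at h1
    rw [div_le_div_iff₀ h2 (by positivity)]
    linarith
  intro j
  have hbj := hbR j
  have hbj1 := hbR (j+1)
  have hbj2 := hbR (j+2)
  have hd1 : |(d (j+1) : ℝ)| / b (j+1) ≤ 1 / (2 * b j) := by
    have := ht (j+1) (by omega); simpa using this
  have hd2 : |(d (j+2) : ℝ)| / b (j+2) ≤ 1 / (2 * b (j+1)) := by
    have := ht (j+2) (by omega); simpa using this
  have hbd1 : (b (j+1) : ℝ) ≥ 2 * b j := by exact_mod_cast hdouble j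
  have hbd2 : (b (j+2) : ℝ) ≥ 2 * b (j+1) := by exact_mod_cast hdouble (j+1)
  -- part 1
  have habs1 : |(b j : ℝ) * d (j + 1) / b (j + 1)| ≤ 1/2 := by
    rw [abs_div, abs_mul, abs_of_pos hbj, abs_of_pos hbj1]
    rw [div_le_iff₀ hbj1]
    rw [div_le_div_iff₀ hbj1 (by positivity)] at hd1
    nlinarith
  have habs2 : |(b j : ℝ) * d (j + 2) / b (j + 2)| ≤ (b j) / (2 * b (j+1)) := by
    rw [abs_div, abs_mul, abs_of_pos hbj, abs_of_pos hbj2]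
    rw [div_le_div_iff₀ hbj2 (by positivity)]
    rw [div_le_div_iff₀ hbj2 (by positivity)] at hd2
    nlinarith
  have hquarter : (b j : ℝ) / (2 * b (j+1)) ≤ 1/4 := by
    rw [div_le_div_iff₀ (by positivity) (by norm_num)]
    nlinarith
  have part1 : |e j| ≤ 3 / 4 := by
    rw [he j]
    calc |(b j : ℝ) * d (j + 1) / b (j + 1) + (b j : ℝ) * d (j + 2) / b (j + 2)|
        ≤ |(b j : ℝ) * d (j + 1) / b (j + 1)| + |(b j : ℝ) * d (j + 2) / b (j + 2)| :=
          abs_add_le _ _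
      _ ≤ 1/2 + 1/4 := add_le_add habs1 (le_trans habs2 hquarter)
      _ = 3/4 := by norm_num
  -- part 2
  have part2 : d (j + 1) ≠ 0 → (b j : ℝ) / (2 * b (j + 1)) ≤ |e j| := by
    intro hd0
    have h1 : (1 : ℝ) ≤ |(d (j+1) : ℝ)| := by
      have h1' : (1 : ℤ) ≤ |d (j+1)| := Int.one_le_abs (by omega)
      calc (1:ℝ) ≤ ((|d (j+1)| : ℤ) : ℝ) := by exact_mod_cast h1'
        _ = |(d (j+1) : ℝ)| := by push_cast; ring
    have hA : (b j : ℝ) / b (j+1) ≤ |(b j : ℝ) * d (j + 1) / b (j + 1)| := by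
      rw [abs_div, abs_mul, abs_of_pos hbj, abs_of_pos hbj1]
      rw [div_le_div_iff₀ hbj1 hbj1]
      nlinarith [mul_le_mul_of_nonneg_left h1 (le_of_lt (mul_pos hbj hbj1))]
    rw [he j]
    have key : ∀ a c : ℝ, |a| - |c| ≤ |a + c| := by
      intro a c
      have h := abs_add_le (a + c) (-c)
      simp only [add_neg_cancel_right, abs_neg] at h
      linarith
    have hid : (b j : ℝ) / b (j+1)
        = (b j : ℝ) / (2 * b (j+1)) + (b j : ℝ) / (2 * b (j+1)) := by
      field_simp
      try ring
    have := key ((b j : ℝ) * d (j + 1) / b (j + 1)) ((b j : ℝ) * d (j + 2) / b (j + 2))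
    linarith [habs2]
  -- summability and geometric bound for the tail
  have hsum0 : Summable (fun n : ℕ => (d (n + 1) : ℝ) / b (n + 1)) := hx.summable
  have hix : ∀ n : ℕ, n + (j + 2) + 1 = n + j + 3 := fun n => by omega
  have hsumj : Summable (fun n : ℕ => (d (n + j + 3) : ℝ) / b (n + j + 3)) := by
    have h := (summable_nat_add_iff (j + 2)).mpr hsum0
    refine h.congr fun n => ?_
    simp only [hix n]
  have hgeom : Summable (fun n : ℕ => (1 / (2 * (b (j+2) : ℝ))) * (1/2)^n) :=
    (summable_geometric_of_lt_one (by norm_num) (by norm_num)).mul_left _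
  have hterm : ∀ n : ℕ, |(d (n + j + 3) : ℝ) / b (n + j + 3)| ≤
      (1 / (2 * (b (j+2) : ℝ))) * (1/2)^n := by
    intro n
    have h1 : |(d (n + j + 3) : ℝ)| / b (n + j + 3) ≤ 1 / (2 * b (n + j + 2)) := by
      have := ht (n + j + 3) (by omega)
      simpa using this
    have h2 : (2:ℝ)^n * b (j + 2) ≤ b (n + j + 2) := by
      exact_mod_cast hpow (j + 2) n
    have hb' := hbR (n + j + 2)
    have hp : (0:ℝ) < (2:ℝ)^n := by positivity
    rw [abs_div, abs_of_pos (hbR (n + j + 3))]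
    calc |(d (n + j + 3) : ℝ)| / b (n + j + 3) ≤ 1 / (2 * b (n + j + 2)) := h1
      _ ≤ 1 / (2 * ((2:ℝ)^n * b (j+2))) :=
          one_div_le_one_div_of_le (by positivity) (by nlinarith)
      _ = (1 / (2 * (b (j+2) : ℝ))) * (1/2)^n := by
          rw [div_pow, one_pow, div_mul_div_comm, one_mul]
          congr 1
          ring
  have habsum : Summable (fun n : ℕ => |(d (n + j + 3) : ℝ) / b (n + j + 3)|) := hsumj.abs
  -- part 3
  have htail : ∑' n : ℕ, |(d (n + j + 3) : ℝ) / b (n + j + 3)| ≤ 1 / (b (j+2) : ℝ) := by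
    have h1 := Summable.tsum_le_tsum hterm habsum hgeom
    have h2 : ∑' n : ℕ, (1 / (2 * (b (j+2) : ℝ))) * (1/2)^n
        = (1 / (2 * (b (j+2) : ℝ))) * 2 := by
      rw [tsum_mul_left, tsum_geometric_of_lt_one (by norm_num) (by norm_num)]
      norm_num
    rw [h2] at h1
    calc ∑' n : ℕ, |(d (n + j + 3) : ℝ) / b (n + j + 3)|
        ≤ (1 / (2 * (b (j+2) : ℝ))) * 2 := h1
      _ = 1 / (b (j+2) : ℝ) := by field_simp
  have part3 : |ε j| ≤ (b j : ℝ) / b (j + 2) := by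
    rw [hε j, abs_mul, abs_of_pos hbj]
    have h1 : |∑' n : ℕ, (d (n + j + 3) : ℝ) / b (n + j + 3)| ≤
        ∑' n : ℕ, |(d (n + j + 3) : ℝ) / b (n + j + 3)| := by
      have := norm_tsum_le_tsum_norm (f := fun n : ℕ => (d (n + j + 3) : ℝ) / b (n + j + 3))
        (by simpa only [Real.norm_eq_abs] using habsum)
      simpa only [Real.norm_eq_abs] using this
    calc (b j : ℝ) * |∑' n : ℕ, (d (n + j + 3) : ℝ) / b (n + j + 3)|
        ≤ (b j : ℝ) * (1 / (b (j+2) : ℝ)) :=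
          mul_le_mul_of_nonneg_left (le_trans h1 htail) (le_of_lt hbj)
      _ = (b j : ℝ) / b (j + 2) := by ring
  -- part 4
  have hmul : HasSum (fun n : ℕ => (b j : ℝ) * ((d (n + 1) : ℝ) / b (n + 1))) ((b j : ℝ) * x) :=
    hx.mul_left _
  have hsplit := Summable.sum_add_tsum_nat_add (f := fun n : ℕ => (b j : ℝ) * ((d (n + 1) : ℝ) / b (n + 1)))
    (j + 2) hmul.summable
  rw [hmul.tsum_eq] at hsplit
  have htailsum : ∑' n : ℕ, (b j : ℝ) * ((d (n + (j + 2) + 1) : ℝ) / b (n + (j + 2) + 1)) = ε j := by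
    rw [hε j, ← tsum_mul_left]
    exact tsum_congr fun n => by rw [hix n]
  rw [htailsum] at hsplit
  have hrange : ∑ n ∈ Finset.range (j + 2), (b j : ℝ) * ((d (n + 1) : ℝ) / b (n + 1))
      = (∑ n ∈ Finset.range j, (b j : ℝ) * ((d (n + 1) : ℝ) / b (n + 1))) + e j := by
    rw [Finset.sum_range_succ, Finset.sum_range_succ, he j]
    ring
  set z : ℤ := ∑ n ∈ Finset.range j, ((b j / b (n + 1) : ℕ) : ℤ) * d (n + 1) with hz
  have hzcast : (z : ℝ) = ∑ n ∈ Finset.range j, (b j : ℝ) * ((d (n + 1) : ℝ) / b (n + 1)) := by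
    rw [hz, Int.cast_sum]
    apply Finset.sum_congr rfl
    intro n hn
    have hdv : b (n + 1) ∣ b j := hmono (n + 1) j (Finset.mem_range.mp hn)
    have hc : ((b j / b (n + 1) : ℕ) : ℝ) = (b j : ℝ) / b (n + 1) :=
      Nat.cast_div hdv (ne_of_gt (hbR (n + 1)))
    rw [Int.cast_mul, Int.cast_natCast, hc]
    ring
  refine ⟨part1, part2, part3, z, ?_⟩
  rw [hzcast]
  rw [hrange] at hsplit
  linarith [hsplit]
end

section
/- Let (b_n) be a D-sequence. Then b_{n+1}/b_n → ∞ if and only if the sequence (b_j)_j converges to 0 in the topology τ_b of uniform convergence, i.e., for every m ∈ ℕ there exists j_m such that dist(b_j/b_n, ℤ) ≤ 1/(4m) for all n ∈ ℕ and all j ≥ j_m. -/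
theorem stmt_14 (b : ℕ → ℕ) (hb : IsDSeq b) :
    Filter.Tendsto (fun n => (b (n + 1) : ℝ) / b n) Filter.atTop Filter.atTop ↔
      ∀ m : ℕ, 0 < m → ∃ J : ℕ, ∀ j ≥ J, ∀ n : ℕ,
        ∃ z : ℤ, |(b j : ℝ) / b n - z| ≤ 1 / (4 * m) := by
  obtain ⟨h0, hdvd, hne⟩ := hb
  have hpos : ∀ n, 0 < b n := by
    intro n
    rcases Nat.eq_zero_or_pos (b n) with h | h
    · exfalso
      have h1 : b (n + 1) = 0 := by
        have := hdvd n; rw [h] at this; exact Nat.eq_zero_of_zero_dvd this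
      exact hne n (by rw [h, h1])
    · exact h
  have hdouble : ∀ n, 2 * b n ≤ b (n + 1) := by
    intro n
    obtain ⟨k, hk⟩ := hdvd n
    have hk0 : k ≠ 0 := by
      rintro rfl; simp at hk; exact absurd hk (hpos (n+1)).ne'
    have hk1 : k ≠ 1 := by
      rintro rfl; simp at hk; exact hne n hk.symm
    have : 2 ≤ k := by omega
    calc 2 * b n = b n * 2 := by ring
    _ ≤ b n * k := Nat.mul_le_mul_left _ this
    _ = b (n + 1) := hk.symm
  have hmono : ∀ n j, n ≤ j → b n ∣ b j := by
    intro n j h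
    induction j with
    | zero => have : n = 0 := by omega
              rw [this]
    | succ j ih =>
      rcases Nat.lt_or_ge n (j+1) with h' | h'
      · exact (ih (by omega)).trans (hdvd j)
      · have : n = j + 1 := by omega
        rw [this]
  have hle : ∀ n j, n ≤ j → b n ≤ b j := fun n j h =>
    Nat.le_of_dvd (hpos j) (hmono n j h)
  constructor
  · intro ht m hm
    have hev := ht.eventually_ge_atTop ((4 * m : ℕ) : ℝ)
    obtain ⟨J, hJ⟩ := Filter.eventually_atTop.mp hev
    refine ⟨J, fun j hj n => ?_⟩
    rcases le_or_gt n j with hnj | hnj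
    · refine ⟨(b j / b n : ℕ), ?_⟩
      have : ((b j / b n : ℕ) : ℝ) = (b j : ℝ) / b n := by
        rw [Nat.cast_div (hmono n j hnj) (by exact_mod_cast (hpos n).ne')]
      rw [Int.cast_natCast, this, sub_self, abs_zero]
      positivity
    · refine ⟨0, ?_⟩
      have hbn : (0:ℝ) < b n := by exact_mod_cast hpos n
      have hbj : (0:ℝ) < b j := by exact_mod_cast hpos j
      have h1 : ((4 * m : ℕ) : ℝ) * b j ≤ b (j + 1) := by
        have := hJ j hj
        rw [le_div_iff₀ hbj] at this
        exact this
      have h2 : (b (j + 1) : ℝ) ≤ b n := by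
        exact_mod_cast hle (j+1) n hnj
      have hm' : (0:ℝ) < 4 * m := by positivity
      rw [Int.cast_zero, sub_zero, abs_of_pos (by positivity)]
      rw [div_le_div_iff₀ hbn hm']
      calc (b j : ℝ) * (4 * m) = ((4 * m : ℕ) : ℝ) * b j := by push_cast; ring
      _ ≤ b (j + 1) := h1
      _ ≤ b n := h2
      _ = 1 * (b n : ℝ) := by ring
  · intro h
    rw [Filter.tendsto_atTop]
    intro C
    set m : ℕ := ⌈C⌉₊ + 1 with hmdef
    obtain ⟨J, hJ⟩ := h m (by omega)
    filter_upwards [Filter.eventually_ge_atTop J] with j hj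
    obtain ⟨z, hz⟩ := hJ j hj (j + 1)
    set x : ℝ := (b j : ℝ) / b (j + 1) with hxdef
    have hbj : (0:ℝ) < b j := by exact_mod_cast hpos j
    have hbj1 : (0:ℝ) < b (j + 1) := by exact_mod_cast hpos (j + 1)
    have hx0 : 0 < x := by positivity
    have hxhalf : x ≤ 1 / 2 := by
      rw [hxdef, div_le_div_iff₀ hbj1 (by norm_num)]
      have h2r : (2:ℝ) * b j ≤ b (j + 1) := by exact_mod_cast hdouble j
      linarith
    have hmr : (1:ℝ) ≤ m := by exact_mod_cast Nat.one_le_iff_ne_zero.mpr (by omega)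
    have hquarter : (1:ℝ) / (4 * m) ≤ 1 / 4 := by
      rw [div_le_div_iff₀ (by positivity) (by norm_num)]
      nlinarith
    have hz0 : z = 0 := by
      have habs : |x - z| ≤ 1 / 4 := hz.trans hquarter
      rw [abs_le] at habs
      have hz1 : (z : ℝ) < 1 := by linarith
      have hz2 : (-1 : ℝ) < z := by linarith
      have : z < 1 := by exact_mod_cast hz1
      have : -1 < z := by exact_mod_cast hz2
      omega
    rw [hz0, Int.cast_zero, sub_zero, abs_of_pos hx0] at hz
    have hm' : (0:ℝ) < 4 * m := by positivity
    rw [hxdef, div_le_div_iff₀ hbj1 hm'] at hz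
    -- hz : b j * (4 * m) ≤ b (j+1) * 1
    have hC : C ≤ (m : ℝ) := by
      calc C ≤ ⌈C⌉₊ := Nat.le_ceil C
      _ ≤ (m : ℝ) := by exact_mod_cast Nat.le_succ _
    rw [le_div_iff₀ hbj]
    nlinarith
end

section
/- Let (b_n) be a D-sequence. Then the topology τ_b of uniform convergence on {ξ_n : n ∈ ℕ} is finer than the linear topology λ_b: every sequence converging to 0 in τ_b converges to 0 in λ_b. Concretely: if for every m there is j_m such that dist(l_j/b_n, ℤ) ≤ 1/(4m) for all n and all j ≥ j_m, then for every n there is j_n such that b_n ∣ l_j for all j ≥ j_n. -/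
theorem IsDSeq.pos_s15 {b : ℕ → ℕ} (hb : IsDSeq b) (n : ℕ) : 0 < b n := by
  refine Nat.pos_of_ne_zero fun h0 => hb.2.2 n ?_
  rw [h0, eq_comm, ← zero_dvd_iff, ← h0]
  exact hb.2.1 n

theorem Int.dvd_of_abs_div_sub_lt {l z : ℤ} {d : ℕ} (hd : 0 < d)
    (h : |(l : ℝ) / d - z| < 1 / d) : (d : ℤ) ∣ l := by
  have hdR : (0 : ℝ) < d := by exact_mod_cast hd
  have hlt : |((l - z * d : ℤ) : ℝ)| < 1 := by
    have hscale : ((l - z * d : ℤ) : ℝ) = ((l : ℝ) / d - z) * d := by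
      push_cast
      field_simp
    calc |((l - z * d : ℤ) : ℝ)| = |(l : ℝ) / d - z| * d := by
          rw [hscale, abs_mul, abs_of_pos hdR]
      _ < 1 / d * d := mul_lt_mul_of_pos_right h hdR
      _ = 1 := by field_simp
  rw [← Int.cast_abs, ← Int.cast_one, Int.cast_lt, Int.abs_lt_one_iff, sub_eq_zero] at hlt
  exact ⟨z, by rw [hlt, mul_comm]⟩

theorem stmt_15 (b : ℕ → ℕ) (hb : IsDSeq b) (l : ℕ → ℤ)
    (h : ∀ m : ℕ, 0 < m → ∃ J : ℕ, ∀ j ≥ J, ∀ n : ℕ,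
      ∃ z : ℤ, |(l j : ℝ) / b n - z| ≤ 1 / (4 * m)) :
    ∀ n : ℕ, ∃ J : ℕ, ∀ j ≥ J, (b n : ℤ) ∣ l j := by
  intro n
  have hbn := hb.pos_s15 n
  have hbnR : (0 : ℝ) < b n := by exact_mod_cast hbn
  obtain ⟨J, hJ⟩ := h (b n) hbn
  refine ⟨J, fun j hj => ?_⟩
  obtain ⟨z, hz⟩ := hJ j hj n
  refine Int.dvd_of_abs_div_sub_lt hbn (hz.trans_lt ?_)
  rw [one_div_lt_one_div (by positivity) hbnR]
  linarith
end

section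
/- Let (b_n) be a D-sequence with b_{n+1}/b_n → ∞. Then the topology τ_b on ℤ is strictly finer than λ_b, that is, λ_b ≤ τ_b and λ_b ≠ τ_b. -/
theorem stmt_18 (b : ℕ → ℕ) (hb : IsDSeq b)
    (hinf : Filter.Tendsto (fun n => (b (n + 1) : ℝ) / b n) Filter.atTop Filter.atTop)
    (tLin tTau : TopologicalSpace ℤ)
    (hLing : @IsTopologicalAddGroup ℤ tLin _) (hTaug : @IsTopologicalAddGroup ℤ tTau _)
    (hLinb : (@nhds ℤ tLin 0).HasBasis (fun _ : ℕ => True) (fun n => {x : ℤ | (b n : ℤ) ∣ x}))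
    (hTaub : (@nhds ℤ tTau 0).HasBasis (fun m : ℕ => 0 < m)
      (fun m => {k : ℤ | ∀ n : ℕ, ∃ z : ℤ, |(k : ℝ) / b n - z| ≤ 1 / (4 * m)})) :
    tTau ≤ tLin ∧ tTau ≠ tLin := by
  obtain ⟨hb0, hdvd, hne⟩ := hb
  -- positivity of all b n
  have hpos : ∀ n, 0 < b n := by
    by_contra h
    push_neg at h
    obtain ⟨n, hn⟩ := h
    have hn0 : b n = 0 := Nat.le_zero.mp hn
    have hz : ∀ m, n ≤ m → b m = 0 := by
      intro m hm
      induction m, hm using Nat.le_induction with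
      | base => exact hn0
      | succ m hm ih => exact zero_dvd_iff.mp (ih ▸ hdvd m)
    obtain ⟨m, h1, hm⟩ :=
      ((hinf.eventually_ge_atTop 1).and (Filter.eventually_ge_atTop n)).exists
    simp only [hz m hm, hz (m + 1) (by omega)] at h1
    norm_num at h1
  have hdvd' : ∀ n N, n ≤ N → b n ∣ b N := by
    intro n N hnN
    induction N, hnN using Nat.le_induction with
    | base => exact dvd_rfl
    | succ N hN ih => exact ih.trans (hdvd N)
  -- τ-neighborhoods of 0 are finer than λ-neighborhoods of 0
  have hle0 : @nhds ℤ tTau 0 ≤ @nhds ℤ tLin 0 := by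
    rw [hTaub.le_basis_iff hLinb]
    intro n _
    refine ⟨b n, hpos n, ?_⟩
    intro k hk
    obtain ⟨z, hz⟩ := hk n
    have hbn : (0:ℝ) < b n := by exact_mod_cast hpos n
    have habs : |((k - z * (b n : ℤ) : ℤ) : ℝ)| < 1 := by
      have h2 : ((k - z * (b n : ℤ) : ℤ) : ℝ) = ((k : ℝ) / b n - z) * (b n : ℝ) := by
        push_cast
        field_simp
      rw [h2, abs_mul, abs_of_pos hbn]
      have h1 : |(k : ℝ) / b n - z| * (b n : ℝ) ≤ 1 / (4 * b n) * (b n : ℝ) :=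
        mul_le_mul_of_nonneg_right hz hbn.le
      have h3 : 1 / (4 * (b n : ℝ)) * (b n : ℝ) = 1 / 4 := by
        field_simp
      rw [h3] at h1
      linarith
    have h4 : |k - z * (b n : ℤ)| < 1 := by exact_mod_cast habs
    rw [abs_lt] at h4
    have h5 : k = z * (b n : ℤ) := by omega
    exact ⟨z, by rw [h5, mul_comm]⟩
  have hle : tTau ≤ tLin := by
    refine le_of_nhds_le_nhds fun x => ?_
    rw [← @map_add_left_nhds_zero ℤ tTau _ hTaug x,
      ← @map_add_left_nhds_zero ℤ tLin _ hLing x]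
    exact Filter.map_mono hle0
  refine ⟨hle, ?_⟩
  intro heq
  -- V_1 is a λ-neighborhood of 0, hence contains some b n ℤ
  have hV1 : {k : ℤ | ∀ n : ℕ, ∃ z : ℤ, |(k : ℝ) / b n - z| ≤ 1 / (4 * (1:ℕ))} ∈
      @nhds ℤ tLin 0 := by
    rw [← heq]
    exact hTaub.mem_of_mem one_pos
  obtain ⟨n, -, hsub⟩ := hLinb.mem_iff.mp hV1
  obtain ⟨N, hN3, hNn⟩ :=
    ((hinf.eventually_ge_atTop 3).and (Filter.eventually_ge_atTop n)).exists
  obtain ⟨r, hr⟩ := hdvd N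
  have hbN : (0:ℝ) < b N := by exact_mod_cast hpos N
  have hr3 : 3 ≤ r := by
    have h := hN3
    rw [hr] at h
    push_cast at h
    rw [mul_div_cancel_left₀ _ hbN.ne'] at h
    exact_mod_cast h
  set t : ℕ := (r + 1) / 2 with ht
  have h2t1 : r ≤ 2 * t := by omega
  have h2t2 : 2 * t ≤ r + 1 := by omega
  have hrpos : (0:ℝ) < r := by positivity
  have htr1 : (1:ℝ)/2 ≤ (t:ℝ)/r := by
    rw [le_div_iff₀ hrpos]
    have : (r:ℝ) ≤ 2 * t := by exact_mod_cast h2t1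
    linarith
  have htr2 : (t:ℝ)/r ≤ 2/3 := by
    rw [div_le_iff₀ hrpos]
    have h1 : (2:ℝ) * t ≤ r + 1 := by exact_mod_cast h2t2
    have h2 : (3:ℝ) ≤ r := by exact_mod_cast hr3
    linarith
  -- the witness element
  set k : ℤ := (t : ℤ) * (b N : ℤ) with hk
  have hkV : k ∈ {k : ℤ | ∀ n : ℕ, ∃ z : ℤ, |(k : ℝ) / b n - z| ≤ 1 / (4 * (1:ℕ))} := by
    apply hsub
    have : (b n : ℤ) ∣ (b N : ℤ) := Int.natCast_dvd_natCast.mpr (hdvd' n N hNn)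
    exact Dvd.dvd.mul_left this _
  obtain ⟨z, hz⟩ := hkV (N + 1)
  have hkb : (k : ℝ) / b (N + 1) = (t:ℝ) / r := by
    rw [hk, hr]
    push_cast
    field_simp
  rw [hkb] at hz
  have hz' := abs_le.mp hz
  norm_num at hz'
  have hz1 : (0:ℝ) < z := by linarith [hz'.2, htr1]
  have hz2 : (z:ℝ) < 1 := by linarith [hz'.1, htr2]
  have hi1 : (0:ℤ) < z := by exact_mod_cast hz1
  have hi2 : z < 1 := by exact_mod_cast hz2
  omega
end

section
/- For every prime p, the p-adic topology on ℤ is not the Mackey topology: there exists a strictly finer metrizable locally quasi-convex group topology τ on ℤ with the same continuous characters into ℝ/ℤ, namely the characters k ↦ (a k / p^n) + ℤ (a ∈ ℤ, n ∈ ℕ), whose images generate the Prüfer group ℤ(p^∞). -/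
/-!
Write `‖·‖` for the distance to the nearest integer and `c_n = p^(n²)`. The topology `τ_c` comes
from the seminorm `x ↦ sup_n ‖x / c_n‖`. As `‖x / c_n‖ ≥ 1 / c_n` unless `c_n ∣ x`, it is finer
than the `p`-adic topology, strictly so because `c_n ⌊q_n / 2⌋` (with `q_n = c_{n+1} / c_n`) is
`p`-adically small while `‖c_n ⌊q_n / 2⌋ / c_{n+1}‖ ≈ 1/2`. The sets where
`‖j x / c_n‖ ≤ 1/4` for all `n` and all `j ≤ m` form a basis of quasi-convex neighbourhoods of `0`.

A character continuous for either topology kills some `p^N`, hence is `k ↦ a k / p^N`. For the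
`p`-adic topology this holds because `ℝ/ℤ` has no small subgroups. For `τ_c`, if `χ c_n ≠ 0` for
all `n`, the growth `q_n → ∞` lets one add up multiples `j c_n` with `j ≤ δ q_n` over many `n` into
an element of seminorm at most `2δ` whose image under `χ` lies outside `[-1/4, 1/4]`.
-/

open Filter Topology

local notation "𝕋" => AddCircle (1 : ℝ)

theorem Finset.exists_le_and_sum_mul_mem_Ioc {ι : Type*} [DecidableEq ι] (s : Finset ι)
    (e : ι → ℝ) (m : ι → ℕ) {a d : ℝ} (ha : 0 ≤ a) (he : ∀ i ∈ s, 0 ≤ e i ∧ e i ≤ d)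
    (h : a < ∑ i ∈ s, m i * e i) :
    ∃ t : ι → ℕ, (∀ i, t i ≤ m i) ∧ ∑ i ∈ s, t i * e i ∈ Set.Ioc a (a + d) := by
  induction s using Finset.induction_on with
  | empty => simp at h; linarith
  | insert b s hb ih =>
    have he' : ∀ i ∈ s, 0 ≤ e i ∧ e i ≤ d := fun i hi => he i (Finset.mem_insert_of_mem hi)
    have hsum : ∀ (t : ι → ℕ) (k : ℕ), ∑ i ∈ insert b s, (Function.update t b k i : ℝ) * e i
        = k * e b + ∑ i ∈ s, t i * e i := fun t k => by
      rw [Finset.sum_insert hb, Function.update_self]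
      congr 1
      exact Finset.sum_congr rfl fun i hi => by
        rw [Function.update_of_ne (ne_of_mem_of_not_mem hi hb)]
    rw [Finset.sum_insert hb] at h
    by_cases hs : a < ∑ i ∈ s, m i * e i
    · obtain ⟨t, htm, hts⟩ := ih he' hs
      refine ⟨Function.update t b 0, fun i => ?_, ?_⟩
      · rcases eq_or_ne i b with rfl | hi
        · simp
        · rw [Function.update_of_ne hi]; exact htm i
      · rwa [hsum, Nat.cast_zero, zero_mul, zero_add]
    · -- take the least multiple of `e b` that exceeds the remaining gap `a'`
      set a' := a - ∑ i ∈ s, m i * e i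
      have ha' : 0 ≤ a' := by linarith
      have heb : 0 < e b := by
        rcases (he b (Finset.mem_insert_self b s)).1.eq_or_lt with h0 | h0
        · rw [← h0, mul_zero] at h; linarith
        · exact h0
      have hk := Nat.lt_floor_add_one (a' / e b)
      refine ⟨Function.update m b (⌊a' / e b⌋₊ + 1), fun i => ?_, ?_⟩
      · rcases eq_or_ne i b with rfl | hi
        · rw [Function.update_self, Nat.add_one_le_iff, Nat.floor_lt (by positivity),
            div_lt_iff₀ heb]
          linarith
        · rw [Function.update_of_ne hi]
      · rw [hsum]
        have hfl := Nat.floor_le (div_nonneg ha' heb.le)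
        rw [div_lt_iff₀ heb] at hk
        rw [le_div_iff₀ heb] at hfl
        have hd := (he b (Finset.mem_insert_self b s)).2
        push_cast
        constructor <;> nlinarith

namespace UnitAddCircle

theorem coe_intCast (n : ℤ) : ((n : ℝ) : 𝕋) = 0 :=
  (AddCircle.coe_eq_zero_iff 1).2 ⟨n, by simp⟩

theorem norm_coe_le_abs (r : ℝ) : ‖(r : 𝕋)‖ ≤ |r| := by
  rw [norm_eq]
  simpa using round_le r 0

theorem exists_coe_eq_and_abs_eq_norm (z : 𝕋) : ∃ y : ℝ, (y : 𝕋) = z ∧ |y| = ‖z‖ := by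
  obtain ⟨x, rfl⟩ := QuotientAddGroup.mk_surjective z
  refine ⟨x - round x, ?_, norm_eq.symm⟩
  rw [AddCircle.coe_sub, coe_intCast, sub_zero]

theorem exists_abs_le_and_coe_eq_iff (z : 𝕋) (ε : ℝ) :
    (∃ r : ℝ, |r| ≤ ε ∧ (r : 𝕋) = z) ↔ ‖z‖ ≤ ε := by
  constructor
  · rintro ⟨r, hr, rfl⟩
    exact (norm_coe_le_abs r).trans hr
  · intro hz
    obtain ⟨y, rfl, hy⟩ := exists_coe_eq_and_abs_eq_norm z
    exact ⟨y, hy ▸ hz, rfl⟩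

theorem norm_nsmul_eq_mul_norm (z : 𝕋) {k : ℕ} (h : k * ‖z‖ ≤ 1 / 2) : ‖k • z‖ = k * ‖z‖ := by
  obtain ⟨y, rfl, hy⟩ := exists_coe_eq_and_abs_eq_norm z
  rw [← hy] at h ⊢
  rw [← AddCircle.coe_nsmul, nsmul_eq_mul, (AddCircle.norm_coe_eq_abs_iff _ one_ne_zero).2]
  · simp [abs_mul]
  · simpa [abs_mul] using h

theorem mul_norm_le_of_forall_nsmul_norm_le (z : 𝕋) {m : ℕ}
    (h : ∀ j ≤ m, ‖j • z‖ ≤ 1 / 4) : m * ‖z‖ ≤ 1 / 4 := by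
  induction m with
  | zero => simp
  | succ m ih =>
    have hm := ih fun j hj => h j (by omega)
    have h1 : ‖z‖ ≤ 1 / 4 := by simpa using h 1 (by omega)
    rw [← norm_nsmul_eq_mul_norm z (by push_cast; linarith)]
    exact h _ le_rfl

theorem eq_zero_of_forall_nsmul_norm_le (z : 𝕋) (h : ∀ j : ℕ, ‖j • z‖ ≤ 1 / 4) : z = 0 := by
  by_contra hz
  have hpos : 0 < ‖z‖ := norm_pos_iff.2 hz
  obtain ⟨m, hm⟩ := exists_nat_gt (1 / 4 / ‖z‖)
  rw [div_lt_iff₀ hpos] at hm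
  linarith [mul_norm_le_of_forall_nsmul_norm_le z (m := m) fun j _ => h j]

theorem exists_zsmul_eq_coe_norm (z : 𝕋) : ∃ s : ℤ, |s| ≤ 1 ∧ s • z = (‖z‖ : 𝕋) := by
  obtain ⟨y, rfl, hy⟩ := exists_coe_eq_and_abs_eq_norm z
  rw [← hy]
  rcases abs_choice y with h | h
  · exact ⟨1, by simp, by rw [h, one_zsmul]⟩
  · exact ⟨-1, by simp, by rw [h, AddCircle.coe_neg, neg_one_zsmul]⟩

theorem natCast_dvd_of_norm_coe_div_lt {x : ℤ} {C : ℕ} (h : ‖((x / C : ℝ) : 𝕋)‖ < 1 / C) :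
    (C : ℤ) ∣ x := by
  rcases Nat.eq_zero_or_pos C with rfl | hC
  · simp at h
  by_contra hx
  have hC' : (0 : ℝ) < C := by exact_mod_cast hC
  have hne : x - round ((x : ℝ) / C) * C ≠ 0 := fun h0 => hx ⟨round ((x : ℝ) / C), by linarith⟩
  have h1 : (1 : ℝ) ≤ |((x - round ((x : ℝ) / C) * C : ℤ) : ℝ)| := by
    exact_mod_cast Int.one_le_abs hne
  rw [norm_eq, show (x : ℝ) / C - round ((x : ℝ) / C) = ((x - round ((x : ℝ) / C) * C : ℤ) : ℝ) / C
    by push_cast; field_simp, abs_div, abs_of_pos hC'] at h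
  exact absurd h (not_lt.2 (div_le_div_of_nonneg_right h1 hC'.le))

theorem quarter_le_norm_half_div {Q : ℕ} (hQ : 2 ≤ Q) :
    1 / 4 ≤ ‖((((Q / 2 : ℕ) : ℝ) / Q : ℝ) : 𝕋)‖ := by
  have hQ' : (0 : ℝ) < Q := by exact_mod_cast (by omega : 0 < Q)
  have h1 : (Q : ℝ) ≤ 4 * ((Q / 2 : ℕ) : ℝ) := by exact_mod_cast (by omega : Q ≤ 4 * (Q / 2))
  have h2 : 2 * ((Q / 2 : ℕ) : ℝ) ≤ Q := by exact_mod_cast (by omega : 2 * (Q / 2) ≤ Q)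
  have hr : 0 ≤ ((Q / 2 : ℕ) : ℝ) / Q := by positivity
  rw [(AddCircle.norm_coe_eq_abs_iff _ one_ne_zero).2, abs_of_nonneg hr]
  · rw [le_div_iff₀ hQ']; linarith
  · rw [abs_of_nonneg hr, abs_one, div_le_div_iff₀ hQ' two_pos]; linarith

theorem frequently_quarter_le_mul_norm (u : ℕ → 𝕋) {q : ℕ → ℕ} (hq : ∀ n, 2 ≤ q n)
    (hu : ∀ n, u (n + 1) = q n • u n) (hne : ∀ n, u n ≠ 0) :
    ∃ᶠ n in atTop, 1 / 4 ≤ q n * ‖u n‖ := by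
  rw [Filter.frequently_atTop]
  intro N
  by_contra! h
  have hgrow : ∀ k, 2 ^ k * ‖u N‖ ≤ ‖u (N + k)‖ := by
    intro k
    induction k with
    | zero => simp
    | succ k ih =>
      have hk := h (N + k) (by omega)
      rw [← add_assoc, hu, norm_nsmul_eq_mul_norm _ (by linarith)]
      calc (2 : ℝ) ^ (k + 1) * ‖u N‖ = 2 * (2 ^ k * ‖u N‖) := by ring
        _ ≤ 2 * ‖u (N + k)‖ := by linarith
        _ ≤ q (N + k) * ‖u (N + k)‖ :=
          mul_le_mul_of_nonneg_right (by exact_mod_cast hq _) (norm_nonneg _)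
  have hpos := norm_pos_iff.2 (hne N)
  obtain ⟨k, hk⟩ := pow_unbounded_of_one_lt (1 / 2 / ‖u N‖) one_lt_two
  rw [div_lt_iff₀ hpos] at hk
  have := AddCircle.norm_le_half_period 1 one_ne_zero (x := u (N + k))
  rw [abs_one] at this
  linarith [hgrow k]

theorem exists_quarter_lt_norm_sum_zsmul (u : ℕ → 𝕋) (m : ℕ → ℕ) {ρ : ℝ} (hρ : 0 < ρ)
    (h : ∃ᶠ n in atTop, ρ ≤ m n * ‖u n‖ ∧ ‖u n‖ ≤ 1 / 4) :
    ∃ (s : Finset ℕ) (t : ℕ → ℤ), (∀ n, |t n| ≤ m n) ∧ 1 / 4 < ‖∑ n ∈ s, t n • u n‖ := by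
  obtain ⟨J, hJ⟩ := exists_nat_gt (1 / 4 / ρ)
  obtain ⟨s, hs, rfl⟩ := (Nat.frequently_atTop_iff_infinite.1 h).exists_subset_card_eq J
  have hsum : 1 / 4 < ∑ n ∈ s, m n * ‖u n‖ := calc
    1 / 4 < s.card * ρ := (div_lt_iff₀ hρ).1 hJ
    _ = ∑ n ∈ s, ρ := by simp
    _ ≤ _ := Finset.sum_le_sum fun n hn => (hs hn).1
  obtain ⟨t, htm, hlo, hhi⟩ := s.exists_le_and_sum_mul_mem_Ioc (fun n => ‖u n‖) m
    (by norm_num) (fun n hn => ⟨norm_nonneg _, (hs hn).2⟩) hsum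
  choose sgn hsgn hsgn_smul using fun n => exists_zsmul_eq_coe_norm (u n)
  refine ⟨s, fun n => t n * sgn n, fun n => ?_, ?_⟩
  · rw [abs_mul, Nat.abs_cast]
    exact (mul_le_of_le_one_right (Nat.cast_nonneg _) (hsgn n)).trans (Nat.cast_le.2 (htm n))
  · have hS : ∑ n ∈ s, (t n * sgn n) • u n = ((∑ n ∈ s, t n * ‖u n‖ : ℝ) : 𝕋) := by
      trans ∑ n ∈ s, ((t n * ‖u n‖ : ℝ) : 𝕋)
      · refine Finset.sum_congr rfl fun n _ => ?_
        rw [mul_smul, hsgn_smul, natCast_zsmul, ← AddCircle.coe_nsmul, nsmul_eq_mul]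
      · exact (map_sum (QuotientAddGroup.mk' (AddSubgroup.zmultiples (1 : ℝ))) _ s).symm
    rw [hS, (AddCircle.norm_coe_eq_abs_iff _ one_ne_zero).2, abs_of_pos (by linarith)]
    · exact hlo
    · rw [abs_of_pos (by linarith), abs_one]; linarith

end UnitAddCircle

theorem AddMonoidHom.map_natCast_eq_zero_iff (χ : ℤ →+ 𝕋) {N : ℕ} (hN : N ≠ 0) :
    χ N = 0 ↔ ∃ a : ℤ, ∀ k : ℤ, χ k = ((a * k / N : ℝ) : 𝕋) := by
  have hN' : (N : ℝ) ≠ 0 := Nat.cast_ne_zero.2 hN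
  constructor
  · intro h
    obtain ⟨α, hα⟩ := QuotientAddGroup.mk_surjective (χ 1)
    have hχ : ∀ k : ℤ, χ k = ((k * α : ℝ) : 𝕋) := fun k => by
      rw [← zsmul_eq_mul, AddCircle.coe_zsmul, hα, ← map_zsmul, smul_eq_mul, mul_one]
    obtain ⟨a, ha⟩ := (AddCircle.coe_eq_zero_iff 1).1 ((hχ N).symm.trans h)
    have ha' : (a : ℝ) = N * α := by simpa using ha
    refine ⟨a, fun k => by rw [hχ k, ha']; congr 1; field_simp⟩
  · rintro ⟨a, ha⟩
    rw [ha, show (a : ℝ) * ((N : ℤ) : ℝ) / N = (a : ℤ) by push_cast; field_simp]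
    exact UnitAddCircle.coe_intCast a

theorem AddMonoidHom.exists_map_pow_eq_zero_iff (χ : ℤ →+ 𝕋) {p : ℕ} (hp : p ≠ 0) :
    (∃ n : ℕ, χ ((p : ℤ) ^ n) = 0) ↔
      ∃ (a : ℤ) (n : ℕ), ∀ k : ℤ, χ k = ((a * k / (p ^ n : ℝ) : ℝ) : 𝕋) := by
  rw [exists_comm]
  refine exists_congr fun n => ?_
  simpa using χ.map_natCast_eq_zero_iff (pow_ne_zero n hp)

theorem AddMonoidHom.map_sum_mul {ι G : Type*} [AddCommGroup G] (χ : ℤ →+ G) (s : Finset ι)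
    (t c : ι → ℤ) : χ (∑ i ∈ s, t i * c i) = ∑ i ∈ s, t i • χ (c i) := by
  simp_rw [map_sum, ← smul_eq_mul, map_zsmul]

theorem IsTopologicalAddGroup.le_of_nhds_zero_le {G : Type*} [AddGroup G]
    {t t' : TopologicalSpace G} (tg : @IsTopologicalAddGroup G t _)
    (tg' : @IsTopologicalAddGroup G t' _) (h : @nhds G t 0 ≤ @nhds G t' 0) : t ≤ t' :=
  le_of_nhds_le_nhds fun x => by
    rw [← @map_add_left_nhds_zero G t _ tg x, ← @map_add_left_nhds_zero G t' _ tg' x]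
    exact map_mono h

section PowDvdTopology

variable {p : ℕ} {t : TopologicalSpace ℤ}

theorem exists_map_pow_eq_zero_of_continuous
    (hb : (@nhds ℤ t 0).HasBasis (fun _ : ℕ => True) fun n => {x : ℤ | (p : ℤ) ^ n ∣ x})
    (χ : ℤ →+ 𝕋) (hχ : @Continuous ℤ 𝕋 t _ χ) : ∃ n : ℕ, χ ((p : ℤ) ^ n) = 0 := by
  have h := (@Continuous.tendsto ℤ 𝕋 t _ _ hχ 0)
    (Metric.closedBall_mem_nhds (χ 0) (by norm_num : (0 : ℝ) < 1 / 4))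
  obtain ⟨n, -, hn⟩ := hb.mem_iff.1 h
  refine ⟨n, UnitAddCircle.eq_zero_of_forall_nsmul_norm_le _ fun j => ?_⟩
  have := hn (show (p : ℤ) ^ n ∣ j • (p : ℤ) ^ n from Dvd.intro_left _ (nsmul_eq_mul _ _).symm)
  simpa [map_zero, ← map_nsmul] using this

theorem continuous_of_map_pow_eq_zero (hg : @IsTopologicalAddGroup ℤ t _)
    (hb : (@nhds ℤ t 0).HasBasis (fun _ : ℕ => True) fun n => {x : ℤ | (p : ℤ) ^ n ∣ x})
    (χ : ℤ →+ 𝕋) {n : ℕ} (h : χ ((p : ℤ) ^ n) = 0) : @Continuous ℤ 𝕋 t _ χ := by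
  refine @continuous_of_continuousAt_zero ℤ t _ hg 𝕋 _ _ _ _ _ _ χ ?_
  refine tendsto_nhds_of_eventually_eq (hb.eventually_iff.2 ⟨n, trivial, ?_⟩)
  rintro _ ⟨k, rfl⟩
  rw [mul_comm, ← smul_eq_mul, map_zsmul, h, smul_zero, map_zero]

theorem continuous_iff_exists_map_pow_eq_zero (hg : @IsTopologicalAddGroup ℤ t _)
    (hb : (@nhds ℤ t 0).HasBasis (fun _ : ℕ => True) fun n => {x : ℤ | (p : ℤ) ^ n ∣ x})
    (χ : ℤ →+ 𝕋) : @Continuous ℤ 𝕋 t _ χ ↔ ∃ n : ℕ, χ ((p : ℤ) ^ n) = 0 :=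
  ⟨exists_map_pow_eq_zero_of_continuous hb χ, fun ⟨_, h⟩ => continuous_of_map_pow_eq_zero hg hb χ h⟩

end PowDvdTopology

/-- The sequence `c_n`, encoded by its ratios `q n = c_{n+1} / c_n`. -/
def scale (q : ℕ → ℕ) (n : ℕ) : ℕ := ∏ i ∈ Finset.range n, q i

section Scale

variable {q : ℕ → ℕ}

theorem scale_succ (n : ℕ) : scale q (n + 1) = scale q n * q n := Finset.prod_range_succ _ _

theorem scale_dvd_scale {m n : ℕ} (h : m ≤ n) : scale q m ∣ scale q n :=
  Finset.prod_dvd_prod_of_subset _ _ _ (Finset.range_subset_range.2 h)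

theorem two_pow_le_scale (hq : ∀ n, 2 ≤ q n) (n : ℕ) : 2 ^ n ≤ scale q n := by
  simpa [scale] using Finset.pow_card_le_prod (Finset.range n) q 2 fun i _ => hq i

theorem scale_pos (hq : ∀ n, 2 ≤ q n) (n : ℕ) : 0 < scale q n :=
  lt_of_lt_of_le (by positivity) (two_pow_le_scale hq n)

theorem sum_scale_succ_le (hq : ∀ n, 2 ≤ q n) (k : ℕ) :
    ∑ n ∈ Finset.range k, scale q (n + 1) ≤ 2 * scale q k := by
  induction k with
  | zero => simp
  | succ k ih =>
    rw [Finset.sum_range_succ, scale_succ k]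
    nlinarith [hq k]

noncomputable def scaleChar (q : ℕ → ℕ) (n : ℕ) : ℤ →+ 𝕋 :=
  zmultiplesHom 𝕋 (((scale q n : ℝ)⁻¹ : ℝ) : 𝕋)

theorem scaleChar_apply (n : ℕ) (k : ℤ) : scaleChar q n k = ((k / scale q n : ℝ) : 𝕋) := by
  rw [scaleChar, zmultiplesHom_apply, ← AddCircle.coe_zsmul, zsmul_eq_mul, div_eq_mul_inv]

theorem scaleChar_eq_zero_of_dvd {n : ℕ} {x : ℤ} (h : (scale q n : ℤ) ∣ x) :
    scaleChar q n x = 0 := by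
  obtain ⟨w, rfl⟩ := h
  rcases eq_or_ne (scale q n) 0 with h0 | h0
  · simp [h0]
  · rw [scaleChar_apply, show ((scale q n * w : ℤ) : ℝ) / scale q n = (w : ℝ) by
      push_cast; field_simp]
    exact UnitAddCircle.coe_intCast w

theorem bddAbove_range_norm_scaleChar (x : ℤ) : BddAbove (Set.range fun n => ‖scaleChar q n x‖) :=
  ⟨1 / 2, by rintro _ ⟨n, rfl⟩; simpa using AddCircle.norm_le_half_period 1 one_ne_zero⟩

end Scale

/-- The seminorm of uniform convergence on the characters `k ↦ k / c_n`; it defines `τ_c`. -/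
noncomputable def tauSeminorm (q : ℕ → ℕ) : AddGroupSeminorm ℤ where
  toFun x := ⨆ n, ‖scaleChar q n x‖
  map_zero' := by simp
  add_le' x y := ciSup_le fun n => by
    rw [map_add]
    exact (norm_add_le _ _).trans (add_le_add (le_ciSup (bddAbove_range_norm_scaleChar x) n)
      (le_ciSup (bddAbove_range_norm_scaleChar y) n))
  neg' x := by simp

section TauSeminorm

variable {q : ℕ → ℕ}

theorem norm_scaleChar_le_tauSeminorm (n : ℕ) (x : ℤ) : ‖scaleChar q n x‖ ≤ tauSeminorm q x :=
  le_ciSup (bddAbove_range_norm_scaleChar x) n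

theorem tauSeminorm_le {x : ℤ} {a : ℝ} (h : ∀ n, ‖scaleChar q n x‖ ≤ a) : tauSeminorm q x ≤ a :=
  ciSup_le h

theorem natCast_scale_dvd_of_tauSeminorm_lt {n : ℕ} {x : ℤ} (h : tauSeminorm q x < 1 / scale q n) :
    (scale q n : ℤ) ∣ x :=
  UnitAddCircle.natCast_dvd_of_norm_coe_div_lt <|
    (scaleChar_apply (q := q) n x ▸ norm_scaleChar_le_tauSeminorm n x).trans_lt h

theorem eq_zero_of_tauSeminorm_eq_zero (hq : ∀ n, 2 ≤ q n) {x : ℤ} (h : tauSeminorm q x = 0) :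
    x = 0 := by
  have hdvd := natCast_scale_dvd_of_tauSeminorm_lt (q := q) (n := x.natAbs) (x := x)
    (h ▸ one_div_pos.2 (by exact_mod_cast scale_pos hq _))
  refine Int.eq_zero_of_dvd_of_natAbs_lt_natAbs hdvd ?_
  rw [Int.natAbs_natCast]
  exact (Nat.lt_two_pow_self).trans_le (two_pow_le_scale hq _)

/-- Modulo `c_k` only the terms with `n < k` survive in `x / c_k`, and those add up to at most
`δ (c_1 + ⋯ + c_k) / c_k ≤ 2 δ`. -/
theorem tauSeminorm_sum_le (hq : ∀ n, 2 ≤ q n) (s : Finset ℕ) (t : ℕ → ℤ) {δ : ℝ} (hδ : 0 ≤ δ)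
    (ht : ∀ n ∈ s, |(t n : ℝ)| ≤ δ * q n) :
    tauSeminorm q (∑ n ∈ s, t n * scale q n) ≤ 2 * δ := by
  refine tauSeminorm_le fun k => ?_
  have hk : (0 : ℝ) < scale q k := by exact_mod_cast scale_pos hq k
  rw [← Finset.sum_filter_add_sum_filter_not s (· < k), map_add,
    scaleChar_eq_zero_of_dvd (Finset.dvd_sum fun n hn => Dvd.dvd.mul_left (Int.natCast_dvd_natCast.2
      (scale_dvd_scale (not_lt.1 (Finset.mem_filter.1 hn).2))) _), add_zero, scaleChar_apply]
  refine (UnitAddCircle.norm_coe_le_abs _).trans ?_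
  rw [abs_div, abs_of_pos hk, div_le_iff₀ hk]
  calc |((∑ n ∈ s with n < k, t n * scale q n : ℤ) : ℝ)|
      ≤ ∑ n ∈ s with n < k, |(t n : ℝ)| * scale q n := by
        push_cast
        exact (Finset.abs_sum_le_sum_abs _ _).trans_eq (by simp [abs_mul])
    _ ≤ ∑ n ∈ s with n < k, δ * scale q (n + 1) := Finset.sum_le_sum fun n hn => by
        rw [scale_succ, Nat.cast_mul, mul_comm (scale q n : ℝ), ← mul_assoc]
        exact mul_le_mul_of_nonneg_right (ht n (Finset.mem_filter.1 hn).1) (Nat.cast_nonneg _)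
    _ ≤ ∑ n ∈ Finset.range k, δ * scale q (n + 1) :=
        Finset.sum_le_sum_of_subset_of_nonneg
          (fun n hn => Finset.mem_range.2 (Finset.mem_filter.1 hn).2) fun _ _ _ => by positivity
    _ = δ * (∑ n ∈ Finset.range k, scale q (n + 1) : ℕ) := by push_cast; rw [Finset.mul_sum]
    _ ≤ δ * (2 * scale q k : ℕ) := by gcongr; exact sum_scale_succ_le hq k
    _ = 2 * δ * scale q k := by push_cast; ring

theorem exists_dvd_and_quarter_le_tauSeminorm (hq : ∀ n, 2 ≤ q n) (N : ℕ) :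
    ∃ x : ℤ, (scale q N : ℤ) ∣ x ∧ 1 / 4 ≤ tauSeminorm q x := by
  refine ⟨scale q N * (q N / 2 : ℕ), dvd_mul_right _ _, ?_⟩
  refine le_trans ?_ (norm_scaleChar_le_tauSeminorm (N + 1) _)
  have hN : (scale q N : ℝ) ≠ 0 := by exact_mod_cast (scale_pos hq N).ne'
  have hx : ((scale q N * (q N / 2 : ℕ) : ℤ) : ℝ) / scale q (N + 1) = ((q N / 2 : ℕ) : ℝ) / q N := by
    rw [scale_succ, Int.cast_mul, Int.cast_natCast, Int.cast_natCast, Nat.cast_mul,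
      mul_div_mul_left _ _ hN]
  rw [scaleChar_apply, hx]
  exact UnitAddCircle.quarter_le_norm_half_div (hq N)

/-- If `u n = χ c_n` never vanishes, then `u (n + 1) = q n • u n` makes small values grow
geometrically, so `‖u n‖ ≥ 1 / (4 q n)` infinitely often; there the multiples `j • u n`,
`j ≤ δ q n`, advance in steps of `‖u n‖ ≤ 1/4` by a total of at least `δ / 8`. -/
theorem exists_map_scale_eq_zero (hq : ∀ n, 2 ≤ q n) (hq' : Tendsto q atTop atTop)
    (χ : ℤ →+ 𝕋) {δ : ℝ} (hδ : 0 < δ) (hχ : ∀ x, tauSeminorm q x ≤ 2 * δ → ‖χ x‖ ≤ 1 / 4) :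
    ∃ N, χ (scale q N) = 0 := by
  by_contra! hne
  set m : ℕ → ℕ := fun n => ⌊δ * q n⌋₊
  have hm : ∀ n, (m n : ℝ) ≤ δ * q n := fun n => Nat.floor_le (by positivity)
  have hsmall : ∀ n, m n * ‖χ (scale q n)‖ ≤ 1 / 4 := fun n =>
    UnitAddCircle.mul_norm_le_of_forall_nsmul_norm_le _ fun j hj => by
      have := hχ _ (tauSeminorm_sum_le hq {n} (fun _ => j) hδ.le fun i hi => by
        rw [Finset.mem_singleton.1 hi]
        simpa using (Nat.cast_le.2 hj).trans (hm n))
      rwa [χ.map_sum_mul, Finset.sum_singleton, natCast_zsmul] at this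
  have hgood : ∃ᶠ n in atTop, δ / 8 ≤ m n * ‖χ (scale q n)‖ ∧ ‖χ (scale q n)‖ ≤ 1 / 4 := by
    refine ((UnitAddCircle.frequently_quarter_le_mul_norm _ hq (fun n => ?_) hne).and_eventually
      (hq'.eventually_ge_atTop ⌈2 / δ⌉₊)).mono fun n ⟨h1, h2⟩ => ?_
    · rw [scale_succ, Nat.cast_mul, mul_comm, ← nsmul_eq_mul, map_nsmul]
    · have h2' : 2 ≤ δ * q n := by
        have := (Nat.le_ceil (2 / δ)).trans (Nat.cast_le.2 h2)
        rwa [div_le_iff₀ hδ, mul_comm] at this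
      have hm1 : δ * q n - 1 < m n := Nat.sub_one_lt_floor _
      have hnorm := norm_nonneg (χ (scale q n))
      constructor
      · nlinarith
      · nlinarith [hsmall n]
  obtain ⟨s, t, ht, hlt⟩ := UnitAddCircle.exists_quarter_lt_norm_sum_zsmul _ m (by positivity) hgood
  have := hχ _ (tauSeminorm_sum_le hq s t hδ.le fun n _ =>
    (by exact_mod_cast ht n : |(t n : ℝ)| ≤ m n).trans (hm n))
  rw [χ.map_sum_mul] at this
  linarith

end TauSeminorm

def quasiConvexHull {G : Type*} [TopologicalSpace G] [AddGroup G] (S : Set G) : Set G :=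
  {x | ∀ χ : G →+ 𝕋, Continuous χ → (∀ u ∈ S, ‖χ u‖ ≤ 1 / 4) → ‖χ x‖ ≤ 1 / 4}

theorem quasiConvexHull_setOf_forall_norm_le {G ι : Type*} [TopologicalSpace G] [AddGroup G]
    (φ : ι → G →+ 𝕋) (hφ : ∀ i, Continuous (φ i)) :
    quasiConvexHull {x | ∀ i, ‖φ i x‖ ≤ 1 / 4} = {x | ∀ i, ‖φ i x‖ ≤ 1 / 4} :=
  Set.Subset.antisymm (fun _ hx i => hx (φ i) (hφ i) fun _ hu => hu i)
    fun x hx _ _ hχ => hχ x hx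

def TauInt (_q : ℕ → ℕ) : Type := ℤ

namespace TauInt

variable {q : ℕ → ℕ}

instance : AddCommGroup (TauInt q) := inferInstanceAs (AddCommGroup ℤ)

def ofInt : ℤ ≃+ TauInt q := AddEquiv.refl ℤ

noncomputable instance [Fact (∀ n, 2 ≤ q n)] : NormedAddCommGroup (TauInt q) :=
  AddGroupNorm.toNormedAddCommGroup
    { tauSeminorm q with
      eq_zero_of_map_eq_zero' := fun _ => eq_zero_of_tauSeminorm_eq_zero Fact.out }

def quasiBall (q : ℕ → ℕ) (m : ℕ) : Set (TauInt q) :=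
  {y | ∀ i : ℕ × Fin (m + 1), ‖((i.2 : ℕ) • scaleChar q i.1) (ofInt.symm y)‖ ≤ 1 / 4}

variable [Fact (∀ n, 2 ≤ q n)]

theorem norm_def (y : TauInt q) : ‖y‖ = tauSeminorm q (ofInt.symm y) := rfl

theorem continuous_of_norm_le (χ : ℤ →+ 𝕋) (C : ℝ) (h : ∀ x, ‖χ x‖ ≤ C * tauSeminorm q x) :
    Continuous fun y : TauInt q => χ (ofInt.symm y) :=
  AddMonoidHomClass.continuous_of_bound (χ.comp (ofInt.symm : TauInt q ≃+ ℤ).toAddMonoidHom) C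
    fun y => h (ofInt.symm y)

theorem hasBasis_nhds_zero_quasiBall :
    (𝓝 (0 : TauInt q)).HasBasis (fun _ : ℕ => True) (quasiBall q) := by
  refine Metric.nhds_basis_ball.to_hasBasis' (fun ε hε => ?_) fun m _ => ?_
  · obtain ⟨m, hm⟩ := exists_nat_gt (1 / 4 / ε)
    have hm0 : (0 : ℝ) < m := lt_trans (by positivity) hm
    refine ⟨m, trivial, fun y hy => ?_⟩
    rw [Metric.mem_ball, dist_zero_right, norm_def]
    refine lt_of_le_of_lt (tauSeminorm_le (a := 1 / 4 / m) fun n => ?_) ?_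
    · rw [le_div_iff₀ hm0, mul_comm]
      exact UnitAddCircle.mul_norm_le_of_forall_nsmul_norm_le _ fun j hj =>
        hy (n, ⟨j, Nat.lt_succ_of_le hj⟩)
    · rwa [div_lt_iff₀ hm0, mul_comm, ← div_lt_iff₀ hε]
  · refine mem_of_superset
      (Metric.ball_mem_nhds 0 (show (0 : ℝ) < 1 / 4 / (m + 1) by positivity)) ?_
    intro y hy i
    rw [Metric.mem_ball, dist_zero_right, norm_def] at hy
    have hi : ((i.2 : ℕ) : ℝ) ≤ m + 1 := by exact_mod_cast i.2.isLt.le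
    calc ‖((i.2 : ℕ) • scaleChar q i.1) (ofInt.symm y)‖
        ≤ (i.2 : ℕ) * ‖scaleChar q i.1 (ofInt.symm y)‖ := norm_nsmul_le
      _ ≤ (m + 1) * (1 / 4 / (m + 1)) :=
        mul_le_mul hi ((norm_scaleChar_le_tauSeminorm _ _).trans hy.le) (norm_nonneg _)
          (by positivity)
      _ = 1 / 4 := by field_simp

theorem quasiConvexHull_quasiBall (m : ℕ) : quasiConvexHull (quasiBall q m) = quasiBall q m :=
  quasiConvexHull_setOf_forall_norm_le
    (fun i : ℕ × Fin (m + 1) => ((i.2 : ℕ) • scaleChar q i.1).comp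
      (ofInt.symm : TauInt q ≃+ ℤ).toAddMonoidHom) fun i =>
      continuous_of_norm_le _ (i.2 : ℕ) fun _ => norm_nsmul_le.trans
        (mul_le_mul_of_nonneg_left (norm_scaleChar_le_tauSeminorm _ _) (Nat.cast_nonneg _))

theorem setOf_dvd_mem_nhds (n : ℕ) :
    {y : TauInt q | (scale q n : ℤ) ∣ ofInt.symm y} ∈ 𝓝 (0 : TauInt q) :=
  mem_of_superset
    (Metric.ball_mem_nhds 0 (one_div_pos.2 (Nat.cast_pos.2 (scale_pos (q := q) Fact.out n))))
    fun _ hy =>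
      natCast_scale_dvd_of_tauSeminorm_lt (by rwa [Metric.mem_ball, dist_zero_right] at hy)

theorem not_setOf_dvd_subset_ball (n : ℕ) :
    ¬ {y : TauInt q | (scale q n : ℤ) ∣ ofInt.symm y} ⊆ Metric.ball 0 (1 / 4) := fun h => by
  obtain ⟨x, hdvd, hx⟩ := exists_dvd_and_quarter_le_tauSeminorm (q := q) Fact.out n
  have := h (a := ofInt x) hdvd
  rw [Metric.mem_ball, dist_zero_right, norm_def, AddEquiv.symm_apply_apply] at this
  linarith

theorem exists_map_scale_eq_zero_of_continuous (hq : Tendsto q atTop atTop) (χ : ℤ →+ 𝕋)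
    (hχ : Continuous fun y : TauInt q => χ (ofInt.symm y)) : ∃ N, χ (scale q N) = 0 := by
  obtain ⟨ε, hε, h⟩ := Metric.continuous_iff.1 hχ 0 (1 / 4) (by norm_num)
  refine exists_map_scale_eq_zero Fact.out hq χ (δ := ε / 4) (by positivity) fun x hx => ?_
  have := h (ofInt x) (by rw [dist_zero_right, norm_def, AddEquiv.symm_apply_apply]; linarith)
  rw [dist_eq_norm, AddEquiv.symm_apply_apply, map_zero, map_zero, sub_zero] at this
  exact this.le

end TauInt

theorem scale_pow_two_mul_add_one (p n : ℕ) : scale (fun i => p ^ (2 * i + 1)) n = p ^ (n ^ 2) := by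
  induction n with
  | zero => simp [scale]
  | succ n ih => rw [scale_succ, ih, ← pow_add]; ring_nf

theorem stmt_19 (p : ℕ) (hp : p.Prime)
    (tLin : TopologicalSpace ℤ) (hLing : @IsTopologicalAddGroup ℤ tLin _)
    (hLinb : (@nhds ℤ tLin 0).HasBasis (fun _ : ℕ => True) (fun n => {x : ℤ | ((p : ℤ) ^ n) ∣ x})) :
    ∃ tTau : TopologicalSpace ℤ,
      @IsTopologicalAddGroup ℤ tTau _ ∧
      @TopologicalSpace.MetrizableSpace ℤ tTau ∧
      -- locally quasi-convex: a neighborhood basis at 0 of quasi-convex sets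
      (∃ (ι : Type) (pb : ι → Prop) (s : ι → Set ℤ),
        (@nhds ℤ tTau 0).HasBasis pb s ∧
        ∀ i, pb i → s i = {x : ℤ | ∀ χ : ℤ →+ AddCircle (1 : ℝ),
          @Continuous ℤ (AddCircle (1 : ℝ)) tTau _ χ →
          (∀ u ∈ s i, ∃ r : ℝ, |r| ≤ 1 / 4 ∧ (r : AddCircle (1 : ℝ)) = χ u) →
          ∃ r : ℝ, |r| ≤ 1 / 4 ∧ (r : AddCircle (1 : ℝ)) = χ x}) ∧
      -- strictly finer than the p-adic topology
      tTau ≤ tLin ∧ tTau ≠ tLin ∧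
      -- same continuous characters
      (∀ χ : ℤ →+ AddCircle (1 : ℝ),
        @Continuous ℤ (AddCircle (1 : ℝ)) tTau _ χ ↔ @Continuous ℤ (AddCircle (1 : ℝ)) tLin _ χ) ∧
      -- the characters are k ↦ a k / p^n + ℤ
      (∀ χ : ℤ →+ AddCircle (1 : ℝ),
        @Continuous ℤ (AddCircle (1 : ℝ)) tLin _ χ ↔
          ∃ (a : ℤ) (n : ℕ), ∀ k : ℤ,
            χ k = ((a * k / (p ^ n : ℝ) : ℝ) : AddCircle (1 : ℝ))) := by
  set q : ℕ → ℕ := fun n => p ^ (2 * n + 1)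
  have hq : ∀ n, 2 ≤ q n := fun n => hp.two_le.trans (Nat.le_self_pow (by omega) p)
  have hq' : Tendsto q atTop atTop := tendsto_atTop_mono (fun n => show n ≤ q n from
    (Nat.lt_pow_self hp.one_lt).le.trans (Nat.pow_le_pow_right hp.pos (by omega))) tendsto_id
  have : Fact (∀ n, 2 ≤ q n) := ⟨hq⟩
  have hdvd : ∀ n (x : ℤ), (scale q n : ℤ) ∣ x → (p : ℤ) ^ n ∣ x := fun n x => dvd_trans <| by
    rw [scale_pow_two_mul_add_one]; push_cast; exact pow_dvd_pow _ (Nat.le_self_pow two_ne_zero n)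
  have hle : (inferInstance : TopologicalSpace (TauInt q)) ≤ tLin :=
    IsTopologicalAddGroup.le_of_nhds_zero_le inferInstance hLing <| hLinb.ge_iff.2 fun n _ =>
      mem_of_superset (TauInt.setOf_dvd_mem_nhds n) fun y => hdvd n _
  have hLin := continuous_iff_exists_map_pow_eq_zero hLing hLinb
  refine ⟨(inferInstance : TopologicalSpace (TauInt q)),
    (inferInstance : IsTopologicalAddGroup (TauInt q)),
    (inferInstance : TopologicalSpace.MetrizableSpace (TauInt q)),
    ⟨ℕ, _, _, TauInt.hasBasis_nhds_zero_quasiBall, fun m _ => ?_⟩, hle, fun h => ?_,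
    fun χ => ⟨fun hχ => ?_, continuous_le_dom hle⟩,
    fun χ => (hLin χ).trans (χ.exists_map_pow_eq_zero_iff hp.ne_zero)⟩
  · simp only [UnitAddCircle.exists_abs_le_and_coe_eq_iff]
    exact (TauInt.quasiConvexHull_quasiBall m).symm
  · subst h
    obtain ⟨n, -, hn⟩ :=
      hLinb.mem_iff.1 (Metric.ball_mem_nhds (0 : TauInt q) (by norm_num : (0 : ℝ) < 1 / 4))
    exact TauInt.not_setOf_dvd_subset_ball n fun y hy => hn (hdvd n _ hy)
  · obtain ⟨N, hN⟩ := TauInt.exists_map_scale_eq_zero_of_continuous hq' χ hχ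
    rw [scale_pow_two_mul_add_one] at hN
    exact (hLin χ).2 ⟨N ^ 2, by exact_mod_cast hN⟩
end
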